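/- arXiv:2209.08561 — 6 statements merged into one kernel-verified Lean document; each statement's English description precedes it below -/
import Mathlib

section
/- Let S be a finite nonempty alphabet, n ≥ 1, and F = {f_i : ℝⁿ → ℝⁿ}_{i∈S} a family of continuous maps. If there exists a path-complete Lyapunov function (V, G) for F, then the switched system x(k+1) = f_{σ(k)}(x(k)) is uniformly globally asymptotically stable (UGAS). -/
open Filter Topology NNReal

def IsClassKInf (α : ℝ≥0 → ℝ≥0) : Prop :=
  Continuous α ∧ α 0 = 0 ∧ StrictMono α ∧ ∀ M : ℝ≥0, ∃ r, M ≤ α r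

def IsClassKL (β : ℝ≥0 → ℝ≥0 → ℝ≥0) : Prop :=
  Continuous (fun p : ℝ≥0 × ℝ≥0 => β p.1 p.2) ∧
  (∀ t, Continuous (fun r => β r t) ∧ β 0 t = 0 ∧ StrictMono (fun r => β r t)) ∧
  (∀ r, Antitone (β r) ∧ Tendsto (β r) atTop (𝓝 0))

def PathComplete {N S : Type*} (E : Set (N × N × S)) : Prop :=
  ∀ K : ℕ, 1 ≤ K → ∀ j : Fin K → S, ∃ a : Fin (K + 1) → N,
    ∀ k : Fin K, (a k.castSucc, a k.succ, j k) ∈ E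

def sol {n : ℕ} {S : Type*} (f : S → EuclideanSpace ℝ (Fin n) → EuclideanSpace ℝ (Fin n))
    (σ : ℕ → S) (x0 : EuclideanSpace ℝ (Fin n)) : ℕ → EuclideanSpace ℝ (Fin n)
  | 0 => x0
  | k + 1 => f (σ k) (sol f σ x0 k)

def UGAS {n : ℕ} {S : Type*}
    (f : S → EuclideanSpace ℝ (Fin n) → EuclideanSpace ℝ (Fin n)) : Prop :=
  ∃ β : ℝ≥0 → ℝ≥0 → ℝ≥0, IsClassKL β ∧
    ∀ (σ : ℕ → S) (x0 : EuclideanSpace ℝ (Fin n)) (k : ℕ),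
      ‖sol f σ x0 k‖₊ ≤ β ‖x0‖₊ (k : ℝ≥0)

def IsPCLF {n : ℕ} {S N : Type*} (E : Set (N × N × S))
    (f : S → EuclideanSpace ℝ (Fin n) → EuclideanSpace ℝ (Fin n))
    (V : N → EuclideanSpace ℝ (Fin n) → ℝ) : Prop :=
  PathComplete E ∧ (∀ s, Continuous (V s)) ∧
  ∃ (α₁ α₂ : ℝ≥0 → ℝ≥0) (γ : ℝ≥0), IsClassKInf α₁ ∧ IsClassKInf α₂ ∧ γ < 1 ∧
    (∀ s x, (α₁ ‖x‖₊ : ℝ) ≤ V s x ∧ V s x ≤ (α₂ ‖x‖₊ : ℝ)) ∧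
    (∀ a b i, (a, b, i) ∈ E → ∀ x, V b (f i x) ≤ (γ : ℝ) * V a x)

def IsCoveringFamily {S : Type*} (C : Finset (Set (List S))) : Prop :=
  (∀ B ∈ C, Language.IsRegular (B : Language S)) ∧
  (⋃ B ∈ C, B) = Set.univ ∧
  ∀ B ∈ C, ∀ h : S, ∃ C' ∈ C, (fun w => h :: w) '' B ⊆ C'

def IsMBLF {n : ℕ} {S : Type*} (C : Finset (Set (List S)))
    (f : S → EuclideanSpace ℝ (Fin n) → EuclideanSpace ℝ (Fin n))
    (W : {B // B ∈ C} → EuclideanSpace ℝ (Fin n) → ℝ) : Prop :=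
  (∀ B, Continuous (W B)) ∧
  ∃ (α₁ α₂ : ℝ≥0 → ℝ≥0) (γ : ℝ≥0), IsClassKInf α₁ ∧ IsClassKInf α₂ ∧ γ < 1 ∧
    (∀ B x, (α₁ ‖x‖₊ : ℝ) ≤ W B x ∧ W B x ≤ (α₂ ‖x‖₊ : ℝ)) ∧
    (∀ (B C' : {B // B ∈ C}) (h : S),
      (fun w => h :: w) '' (B : Set (List S)) ⊆ (C' : Set (List S)) →
      ∀ x, W C' (f h x) ≤ (γ : ℝ) * W B x)

def prefixClass {S : Type*} (i : List S) : Set (List S) := {w | w <+: i ∨ i <+: w}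

/-! Along a switching signal, path-completeness supplies a path of the graph labelled by the
first `k` modes, and the Lyapunov inequalities along its edges give
`α₁ |x(k)| ≤ γ ^ k α₂ |x₀|`. Inverting the class-K∞ function `α₁` turns this geometric decay
into the class-KL bound `β(r, t) = α₁⁻¹ (γ ^ t α₂ r)`. -/

namespace IsClassKInf

variable {α α' : ℝ≥0 → ℝ≥0}

theorem surjective (hα : IsClassKInf α) : Function.Surjective α := by
  intro y
  obtain ⟨r, hr⟩ := hα.2.2.2 y
  have hy : y ∈ Set.Icc (α 0) (α r) := ⟨by rw [hα.2.1]; exact zero_le, hr⟩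
  obtain ⟨x, -, hx⟩ := intermediate_value_Icc (zero_le : 0 ≤ r) hα.1.continuousOn hy
  exact ⟨x, hx⟩

noncomputable def orderIso (hα : IsClassKInf α) : ℝ≥0 ≃o ℝ≥0 :=
  hα.2.2.1.orderIsoOfSurjective α hα.surjective

@[simp]
theorem orderIso_apply (hα : IsClassKInf α) (r : ℝ≥0) : hα.orderIso r = α r := rfl

theorem max (hα : IsClassKInf α) (hα' : IsClassKInf α') :
    IsClassKInf fun r => max (α r) (α' r) :=
  ⟨hα.1.max hα'.1, by simp [hα.2.1, hα'.2.1], fun _ _ h => max_lt_max (hα.2.2.1 h) (hα'.2.2.1 h),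
    fun M => (hα.2.2.2 M).imp fun _ hr => hr.trans (le_max_left _ _)⟩

end IsClassKInf

theorem isClassKL_comp_rpow_mul {α : ℝ≥0 → ℝ≥0} (e : ℝ≥0 ≃o ℝ≥0) (hα : IsClassKInf α)
    {γ : ℝ≥0} (hγ₀ : 0 < γ) (hγ₁ : γ < 1) :
    IsClassKL fun r t => e (γ ^ (t : ℝ) * α r) := by
  have he : e 0 = 0 := by simpa using e.map_bot
  have hdecay : Continuous fun t : ℝ≥0 => γ ^ (t : ℝ) :=
    continuous_iff_continuousAt.2 fun t =>
      tendsto_const_nhds.nnrpow (NNReal.continuous_coe.tendsto t) (Or.inl hγ₀.ne')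
  have hdecay_tendsto : Tendsto (fun t : ℝ≥0 => γ ^ (t : ℝ)) atTop (𝓝 0) := by
    rw [← NNReal.tendsto_coe]
    simpa [Function.comp_def] using
      (tendsto_rpow_atTop_of_base_lt_one γ (by linarith [γ.2]) hγ₁).comp
        (NNReal.tendsto_coe_atTop.2 tendsto_id)
  refine ⟨e.continuous.comp ((hdecay.comp continuous_snd).mul (hα.1.comp continuous_fst)),
    fun t => ⟨e.continuous.comp (continuous_const.mul hα.1), by simp [hα.2.1, he], ?_⟩,
    fun r => ⟨?_, ?_⟩⟩
  · exact e.strictMono.comp fun _ _ h => mul_lt_mul_of_pos_left (hα.2.2.1 h) (rpow_pos hγ₀)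
  · exact e.monotone.comp_antitone fun _ _ h =>
      mul_le_mul_left (rpow_le_rpow_of_exponent_ge hγ₀ hγ₁.le h) _
  · have h := (e.continuous.tendsto _).comp (hdecay_tendsto.mul_const (α r))
    rwa [zero_mul, he] at h

theorem exists_isClassKL_of_geometric_decay {α₁ α₂ : ℝ≥0 → ℝ≥0} (hα₁ : IsClassKInf α₁)
    (hα₂ : IsClassKInf α₂) {γ : ℝ≥0} (hγ : γ < 1) :
    ∃ β, IsClassKL β ∧ ∀ r s (k : ℕ), α₁ s ≤ γ ^ k * α₂ r → s ≤ β r k := by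
  -- `γ` may be `0`, where `t ↦ γ ^ t` is discontinuous at `t = 0`
  set γ' : ℝ≥0 := max γ (1 / 2)
  have hγ'₁ : γ' < 1 := max_lt hγ (by norm_num)
  have hγ'₀ : 0 < γ' := lt_max_of_lt_right (by norm_num)
  refine ⟨_, isClassKL_comp_rpow_mul hα₁.orderIso.symm hα₂ hγ'₀ hγ'₁, fun r s k h => ?_⟩
  rw [OrderIso.le_symm_apply, NNReal.coe_natCast, rpow_natCast, hα₁.orderIso_apply]
  exact h.trans (by gcongr; exact le_max_left _ _)

theorem PathComplete.exists_walk {N S : Type*} {E : Set (N × N × S)} (hE : PathComplete E)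
    {K : ℕ} (hK : 1 ≤ K) (σ : ℕ → S) : ∃ a : ℕ → N, ∀ m < K, (a m, a (m + 1), σ m) ∈ E := by
  obtain ⟨a, ha⟩ := hE K hK fun m => σ m
  refine ⟨fun m => a ⟨min m K, by omega⟩, fun m hm => ?_⟩
  convert ha ⟨m, hm⟩ using 3
  · exact Fin.ext (min_eq_left hm.le)
  · exact congrArg a (Fin.ext (min_eq_left hm))

theorem apply_sol_le_pow_mul {n : ℕ} {S N : Type*} {E : Set (N × N × S)}
    {f : S → EuclideanSpace ℝ (Fin n) → EuclideanSpace ℝ (Fin n)}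
    {V : N → EuclideanSpace ℝ (Fin n) → ℝ} {γ : ℝ} (hγ : 0 ≤ γ)
    (hdec : ∀ a b i, (a, b, i) ∈ E → ∀ x, V b (f i x) ≤ γ * V a x)
    {σ : ℕ → S} {a : ℕ → N} {K : ℕ} (ha : ∀ m < K, (a m, a (m + 1), σ m) ∈ E)
    (x0 : EuclideanSpace ℝ (Fin n)) : V (a K) (sol f σ x0 K) ≤ γ ^ K * V (a 0) x0 := by
  induction K with
  | zero => simp [sol]
  | succ K ih =>
    calc V (a (K + 1)) (sol f σ x0 (K + 1))
        ≤ γ * V (a K) (sol f σ x0 K) := hdec _ _ _ (ha K K.lt_succ_self) _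
      _ ≤ γ * (γ ^ K * V (a 0) x0) := by gcongr; exact ih fun m hm => ha m (by omega)
      _ = γ ^ (K + 1) * V (a 0) x0 := by ring

theorem pclf_implies_ugas_general {S : Type}
    (n : ℕ)
    (f : S → EuclideanSpace ℝ (Fin n) → EuclideanSpace ℝ (Fin n))
    {N : Type} (E : Set (N × N × S))
    (V : N → EuclideanSpace ℝ (Fin n) → ℝ)
    (hV : IsPCLF E f V) : UGAS f := by
  obtain ⟨hE, -, α₁, α₂, γ, hα₁, hα₂, hγ, hbound, hdec⟩ := hV
  -- `max α₁ α₂` in place of `α₂` covers `k = 0`, where no node of the graph is visited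
  obtain ⟨β, hβ, hle⟩ := exists_isClassKL_of_geometric_decay hα₁ (hα₁.max hα₂) hγ
  refine ⟨β, hβ, fun σ x0 k => hle _ _ _ ?_⟩
  rcases Nat.eq_zero_or_pos k with rfl | hk
  · simp [sol]
  obtain ⟨a, ha⟩ := hE.exists_walk hk σ
  have hdecay : (α₁ ‖sol f σ x0 k‖₊ : ℝ) ≤ γ ^ k * α₂ ‖x0‖₊ := calc
    _ ≤ V (a k) (sol f σ x0 k) := (hbound _ _).1
    _ ≤ γ ^ k * V (a 0) x0 := apply_sol_le_pow_mul γ.2 hdec ha x0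
    _ ≤ γ ^ k * α₂ ‖x0‖₊ := by gcongr; exact (hbound _ _).2
  exact (by exact_mod_cast hdecay : α₁ _ ≤ γ ^ k * α₂ _).trans (by gcongr; exact le_max_right _ _)

/-- existence of a path-complete Lyapunov function implies UGAS. -/
theorem pclf_implies_ugas {S : Type} [Fintype S] [Nonempty S]
    (n : ℕ) (hn : 1 ≤ n)
    (f : S → EuclideanSpace ℝ (Fin n) → EuclideanSpace ℝ (Fin n))
    (hf : ∀ i, Continuous (f i))
    {N : Type} [Fintype N] (E : Set (N × N × S))
    (V : N → EuclideanSpace ℝ (Fin n) → ℝ)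
    (hV : IsPCLF E f V) : UGAS f :=
  pclf_implies_ugas_general n f E V hV
end

section
/- Let S be a finite nonempty alphabet and C a covering family of languages over S. Then there exist a complete graph G_C = (N_C, E_C) on S and a bijection Φ : N_C → C (with edges given by (a, b, h) ∈ E_C if and only if h·Φ(a) ⊆ Φ(b)) such that for every n ≥ 1 and every family F = {f_i : ℝⁿ → ℝⁿ}_{i∈S} of continuous maps the following equivalence holds: a function W : C × ℝⁿ → ℝ is a C-memory-based Lyapunov function for F if and only if the pair ({W(Φ(s), ·)}_{s∈N_C}, G_C) is a path-complete Lyapunov function for F. -/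
open Filter Topology NNReal

lemma complete_pathComplete {N S : Type*} [Nonempty N] (E : Set (N × N × S))
    (hc : ∀ (a : N) (i : S), ∃ b, (a, b, i) ∈ E) : PathComplete E := by
  intro K _ j
  classical
  let g : ℕ → N := fun k => Nat.rec (Classical.arbitrary N)
    (fun k prev => if h : k < K then Classical.choose (hc prev (j ⟨k, h⟩)) else prev) k
  refine ⟨fun k => g k, fun k => ?_⟩
  have hk : (k : ℕ) < K := k.2
  have : g ((k : ℕ) + 1) = Classical.choose (hc (g k) (j ⟨k, hk⟩)) := by
    simp only [g, dif_pos hk]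
  have hspec := Classical.choose_spec (hc (g (k : ℕ)) (j ⟨(k : ℕ), hk⟩))
  simpa [Fin.castSucc, Fin.succ, this] using hspec

/-- Theorem 1: every covering family of languages yields a
complete graph, with nodes in bijection with the family and edges given by
language inclusion under prepending, such that memory-based Lyapunov
functions correspond exactly to path-complete Lyapunov functions. -/
theorem mblf_equiv_pclf {S : Type} [Fintype S] [Nonempty S]
    (C : Finset (Set (List S))) (hC : IsCoveringFamily C) :
    ∃ (NC : Type) (_ : Fintype NC) (EC : Set (NC × NC × S))
      (Φ : NC → {B // B ∈ C}),
      Function.Bijective Φ ∧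
      (∀ (a : NC) (i : S), ∃ b : NC, (a, b, i) ∈ EC) ∧
      (∀ (a b : NC) (h : S), (a, b, h) ∈ EC ↔
        (fun w => h :: w) '' (Φ a : Set (List S)) ⊆ (Φ b : Set (List S))) ∧
      (∀ (n : ℕ), 1 ≤ n →
        ∀ f : S → EuclideanSpace ℝ (Fin n) → EuclideanSpace ℝ (Fin n),
          (∀ i, Continuous (f i)) →
          ∀ W : {B // B ∈ C} → EuclideanSpace ℝ (Fin n) → ℝ,
            (IsMBLF C f W ↔ IsPCLF EC f fun s => W (Φ s))) := by
  classical
  have hCne : C.Nonempty := by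
    by_contra hne
    have : (⋃ B ∈ C, B) = (∅ : Set (List S)) := by
      simp [Finset.not_nonempty_iff_eq_empty.mp hne]
    rw [hC.2.1] at this
    exact absurd (Set.mem_univ ([] : List S)) (by simp [this])
  haveI : Nonempty {B // B ∈ C} := ⟨⟨hCne.choose, hCne.choose_spec⟩⟩
  refine ⟨{B // B ∈ C}, inferInstance,
    {p | (fun w => p.2.2 :: w) '' (p.1 : Set (List S)) ⊆ (p.2.1 : Set (List S))},
    id, Function.bijective_id, ?_, fun a b h => Iff.rfl, ?_⟩
  · intro a i
    obtain ⟨C', hC', hsub⟩ := hC.2.2 a a.2 i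
    exact ⟨⟨C', hC'⟩, hsub⟩
  · intro n hn f hf W
    constructor
    · rintro ⟨hcont, α₁, α₂, γ, h1, h2, h3, h4, h5⟩
      refine ⟨complete_pathComplete _ ?_, hcont, α₁, α₂, γ, h1, h2, h3, h4, ?_⟩
      · intro a i
        obtain ⟨C', hC', hsub⟩ := hC.2.2 a a.2 i
        exact ⟨⟨C', hC'⟩, hsub⟩
      · intro a b i hE x
        exact h5 a b i hE x
    · rintro ⟨_, hcont, α₁, α₂, γ, h1, h2, h3, h4, h5⟩
      exact ⟨hcont, α₁, α₂, γ, h1, h2, h3, h4, fun B C' h hsub x => h5 B C' h hsub x⟩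
end

section
/- For every path-complete graph G = (N, E) on a finite nonempty alphabet S there exists a covering family of languages C_G over S such that the following holds: for every n ≥ 1 and every family F = {f_i : ℝⁿ → ℝⁿ}_{i∈S} of continuous maps, if there exists V = {V_s : ℝⁿ → ℝ}_{s∈N} such that (V, G) is a path-complete Lyapunov function for F, then there exists a C_G-memory-based Lyapunov function W : C_G × ℝⁿ → ℝ for F with the property that for every B ∈ C_G there is a nonempty subset P ⊆ N with W(B, x) = max_{s∈P} V_s(x) for all x ∈ ℝⁿ. -/
open Filter Topology NNReal

/-!
Let `Φ(w) ⊆ N` be the set of nodes at which a path of `G` can end whose labels, read from the last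
edge back, spell `w`. Since `Φ(h·w)` depends only on `h` and `Φ(w)`, the nonempty fibres of `Φ`
are finitely many regular languages and prefixing by `h` maps each into another one: they form the
covering family. On the fibre where `Φ = P` put `W = max_{s ∈ P} V_s`. Path-completeness makes
`P` nonempty, and every `b ∈ Φ(h·w)` is reached by an `h`-edge from some `a ∈ Φ(w)`, so
`V_b(f_h x) ≤ γ V_a(x) ≤ γ W(B, x)`.
-/

section PathEnds

variable {S N : Type*} [Fintype N]

open Classical in
noncomputable def succSet (E : Set (N × N × S)) (h : S) (P : Finset N) : Finset N :=
  Finset.univ.filter fun b => ∃ a ∈ P, (a, b, h) ∈ E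

lemma mem_succSet {E : Set (N × N × S)} {h : S} {P : Finset N} {b : N} :
    b ∈ succSet E h P ↔ ∃ a ∈ P, (a, b, h) ∈ E := by
  simp [succSet]

noncomputable def pathEnds (E : Set (N × N × S)) (w : List S) : Finset N :=
  w.foldr (succSet E) Finset.univ

lemma pathEnds_cons (E : Set (N × N × S)) (h : S) (w : List S) :
    pathEnds E (h :: w) = succSet E h (pathEnds E w) := rfl

lemma last_mem_pathEnds {E : Set (N × N × S)} :
    ∀ {K : ℕ} (a : Fin (K + 1) → N) (j : Fin K → S),
      (∀ k : Fin K, (a k.castSucc, a k.succ, j k) ∈ E) →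
      a (Fin.last K) ∈ pathEnds E (List.ofFn fun k => j k.rev)
  | 0, a, _, _ => by simp [pathEnds]
  | K + 1, a, j, hj => by
    rw [List.ofFn_succ, pathEnds_cons, mem_succSet]
    refine ⟨a (Fin.last K).castSucc, ?_, by simpa using hj (Fin.last K)⟩
    simpa only [Fin.rev_succ] using
      last_mem_pathEnds (fun i => a i.castSucc) (fun k => j k.castSucc) fun k => hj k.castSucc

lemma PathComplete.pathEnds_nonempty [Nonempty S] {E : Set (N × N × S)} (hE : PathComplete E)
    (w : List S) : (pathEnds E w).Nonempty := by
  rcases w with _ | ⟨h, t⟩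
  · obtain ⟨a, -⟩ := hE 1 le_rfl fun _ => Classical.arbitrary S
    exact ⟨a 0, Finset.mem_univ _⟩
  · obtain ⟨a, ha⟩ := hE (h :: t).length (by simp) fun k => (h :: t)[k.rev]
    exact ⟨_, by simpa using last_mem_pathEnds a _ ha⟩

end PathEnds

section FiberFamily

variable {S σ : Type*} [Fintype σ]

lemma isRegular_preimage_foldr (step : S → σ → σ) (init p : σ) :
    Language.IsRegular
      (((fun w : List S => w.foldr step init) ⁻¹' {p} : Set (List S)) : Language S) := by
  refine .of_reverse (Language.isRegular_iff.2 ⟨σ, inferInstance,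
    ⟨fun q h => step h q, init, {p}⟩, ?_⟩)
  ext w
  change w.foldl (fun q h => step h q) init = p ↔ w.reverse.foldr step init = p
  rw [List.foldr_reverse]

open Classical in
noncomputable def fiberFamily (φ : List S → σ) : Finset (Set (List S)) :=
  (Finset.univ.filter (· ∈ Set.range φ)).image fun p => φ ⁻¹' {p}

lemma mem_fiberFamily {φ : List S → σ} {B : Set (List S)} :
    B ∈ fiberFamily φ ↔ ∃ w, φ ⁻¹' {φ w} = B := by
  simp [fiberFamily]

lemma isCoveringFamily_fiberFamily_foldr (step : S → σ → σ) (init : σ) :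
    IsCoveringFamily (fiberFamily fun w : List S => w.foldr step init) := by
  refine ⟨?_, ?_, ?_⟩
  · rintro B hB
    obtain ⟨w, rfl⟩ := mem_fiberFamily.1 hB
    exact isRegular_preimage_foldr step init _
  · refine Set.eq_univ_of_forall fun w => Set.mem_biUnion (mem_fiberFamily.2 ⟨w, rfl⟩) rfl
  · rintro B hB h
    obtain ⟨w, rfl⟩ := mem_fiberFamily.1 hB
    refine ⟨_, mem_fiberFamily.2 ⟨h :: w, rfl⟩, ?_⟩
    rintro - ⟨v, hv, rfl⟩
    simp only [Set.mem_preimage, Set.mem_singleton_iff, List.foldr_cons] at hv ⊢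
    rw [hv]

end FiberFamily

theorem IsPCLF.isMBLF_sup' {n : ℕ} {S N : Type*} [Fintype N] {E : Set (N × N × S)}
    {f : S → EuclideanSpace ℝ (Fin n) → EuclideanSpace ℝ (Fin n)}
    {V : N → EuclideanSpace ℝ (Fin n) → ℝ} (hV : IsPCLF E f V) (C : Finset (Set (List S)))
    (P : {B // B ∈ C} → Finset N) (hP : ∀ B, (P B).Nonempty)
    (hstep : ∀ (B C' : {B // B ∈ C}) (h : S),
      (fun w => h :: w) '' (B : Set (List S)) ⊆ (C' : Set (List S)) → P C' ⊆ succSet E h (P B)) :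
    IsMBLF C f fun B x => (P B).sup' (hP B) fun s => V s x := by
  obtain ⟨-, hVcont, α₁, α₂, γ, hα₁, hα₂, hγ, hbnd, hdec⟩ := hV
  refine ⟨fun B => Continuous.finset_sup'_apply (hP B) fun s _ => hVcont s,
    α₁, α₂, γ, hα₁, hα₂, hγ, fun B x => ⟨?_, ?_⟩, fun B C' h hsub x => ?_⟩
  · obtain ⟨s, hs⟩ := hP B
    exact Finset.le_sup'_of_le _ hs (hbnd s x).1
  · exact Finset.sup'_le _ _ fun s _ => (hbnd s x).2
  · refine Finset.sup'_le _ _ fun b hb => ?_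
    obtain ⟨a, ha, hab⟩ := mem_succSet.1 (hstep B C' h hsub hb)
    calc V b (f h x) ≤ γ * V a x := hdec a b h hab x
      _ ≤ γ * (P B).sup' (hP B) fun s => V s x :=
        mul_le_mul_of_nonneg_left (Finset.le_sup' (fun s => V s x) ha) γ.2

theorem pclf_to_mblf_general {S : Type} [Nonempty S]
    {N : Type} [Fintype N] (E : Set (N × N × S)) :
    ∃ CG : Finset (Set (List S)), IsCoveringFamily CG ∧
      ∀ (n : ℕ), 1 ≤ n →
        ∀ f : S → EuclideanSpace ℝ (Fin n) → EuclideanSpace ℝ (Fin n),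
          (∀ i, Continuous (f i)) →
          ∀ V : N → EuclideanSpace ℝ (Fin n) → ℝ, IsPCLF E f V →
            ∃ W : {B // B ∈ CG} → EuclideanSpace ℝ (Fin n) → ℝ,
              IsMBLF CG f W ∧
              ∀ B : {B // B ∈ CG}, ∃ (P : Finset N) (hP : P.Nonempty),
                ∀ x, W B x = P.sup' hP fun s => V s x := by
  refine ⟨fiberFamily (pathEnds E), isCoveringFamily_fiberFamily_foldr _ _, ?_⟩
  intro n _ f _ V hV
  choose w hw using fun B : {B // B ∈ fiberFamily (pathEnds E)} => mem_fiberFamily.1 B.2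
  have hne := fun B => hV.1.pathEnds_nonempty (w B)
  refine ⟨_, hV.isMBLF_sup' _ (fun B => pathEnds E (w B)) hne ?_, fun B => ⟨_, hne B, fun _ => rfl⟩⟩
  intro B C' h hsub
  have hmem : h :: w B ∈ (C' : Set (List S)) := hsub ⟨w B, by rw [← hw B]; rfl, rfl⟩
  rw [← hw C'] at hmem
  exact (Set.mem_singleton_iff.1 hmem).ge

/-- Theorem 2: every path-complete graph admits a covering
family of languages such that any PCLF on the graph yields a memory-based
Lyapunov function built from pointwise maxima of the original pieces. -/
theorem pclf_to_mblf {S : Type} [Fintype S] [Nonempty S]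
    {N : Type} [Fintype N] (E : Set (N × N × S)) (hpc : PathComplete E) :
    ∃ CG : Finset (Set (List S)), IsCoveringFamily CG ∧
      ∀ (n : ℕ), 1 ≤ n →
        ∀ f : S → EuclideanSpace ℝ (Fin n) → EuclideanSpace ℝ (Fin n),
          (∀ i, Continuous (f i)) →
          ∀ V : N → EuclideanSpace ℝ (Fin n) → ℝ, IsPCLF E f V →
            ∃ W : {B // B ∈ CG} → EuclideanSpace ℝ (Fin n) → ℝ,
              IsMBLF CG f W ∧
              ∀ B : {B // B ∈ CG}, ∃ (P : Finset N) (hP : P.Nonempty),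
                ∀ x, W B x = P.sup' hP fun s => V s x :=
  pclf_to_mblf_general E
end

section
/- For every path-complete graph G = (N, E) on a finite nonempty alphabet S there exists a graph O_G = (N_O, E_O) on S, with N_O a collection of nonempty subsets of N, which is deterministic and complete, and such that the following holds for every n ≥ 1 and every family F = {f_i : ℝⁿ → ℝⁿ}_{i∈S} of continuous maps: if V = {V_s : ℝⁿ → ℝ}_{s∈N} is such that (V, G) is a path-complete Lyapunov function for F, then, defining W_P(x) := max_{s∈P} V_s(x) for each P ∈ N_O, the pair ({W_P}_{P∈N_O}, O_G) is a path-complete Lyapunov function for F. -/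
open Filter Topology NNReal

/-!
Subset construction: the observer graph has as nodes the sets of nodes of `G` in which a walk
of `G` labelled by a given word can end, and it reads a letter `i` by passing from `P` to the
set of `i`-successors of `P`. It is deterministic and complete by construction, path-completeness
of `G` makes all these sets nonempty, and each target `t` of an observer edge `P → Q` has a
`G`-predecessor `s ∈ P`, so `V_t (f_i x) ≤ γ V_s x ≤ γ W_P x` and hence `W_Q (f_i x) ≤ γ W_P x`.
-/

section PathComplete

variable {M S : Type*}

theorem pathComplete_of_forall_exists [Nonempty M] {E : Set (M × M × S)}
    (hE : ∀ a i, ∃ b, (a, b, i) ∈ E) : PathComplete E := by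
  choose g hg using hE
  intro K _ j
  let walk : ℕ → M := fun k =>
    Nat.rec (Classical.arbitrary M) (fun k a => if h : k < K then g a (j ⟨k, h⟩) else a) k
  refine ⟨fun k => walk k, fun k => ?_⟩
  have hstep : walk (k + 1) = g (walk k) (j k) := by simp [walk, k.isLt]
  simpa [hstep] using hg (walk k) (j k)

end PathComplete

section Lyapunov

variable {n : ℕ} {S N M : Type*} {E : Set (N × N × S)}
  {f : S → EuclideanSpace ℝ (Fin n) → EuclideanSpace ℝ (Fin n)}
  {V : N → EuclideanSpace ℝ (Fin n) → ℝ}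

theorem IsPCLF.sup' (hV : IsPCLF E f V) (EO : Set (M × M × S)) (hEO : PathComplete EO)
    (ι : M → Finset N) (hι : ∀ a, (ι a).Nonempty)
    (hpred : ∀ a b i, (a, b, i) ∈ EO → ∀ t ∈ ι b, ∃ s ∈ ι a, (s, t, i) ∈ E) :
    IsPCLF EO f fun a x => (ι a).sup' (hι a) fun s => V s x := by
  obtain ⟨-, hcont, α₁, α₂, γ, hα₁, hα₂, hγ, hbound, hdec⟩ := hV
  refine ⟨hEO, fun a => Continuous.finset_sup'_apply (hι a) fun s _ => hcont s,
    α₁, α₂, γ, hα₁, hα₂, hγ, fun a x => ⟨?_, ?_⟩, fun a b i hab x => ?_⟩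
  · obtain ⟨s, hs⟩ := hι a
    exact (hbound s x).1.trans (Finset.le_sup' (fun s => V s x) hs)
  · exact Finset.sup'_le _ _ fun s _ => (hbound s x).2
  · refine Finset.sup'_le _ _ fun t ht => ?_
    obtain ⟨s, hs, hst⟩ := hpred a b i hab t ht
    calc V t (f i x) ≤ γ * V s x := hdec s t i hst x
      _ ≤ γ * (ι a).sup' (hι a) fun s => V s x :=
        mul_le_mul_of_nonneg_left (Finset.le_sup' (fun s => V s x) hs) γ.coe_nonneg

end Lyapunov

namespace Observer

variable {N S : Type*} [Fintype N] (E : Set (N × N × S))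

open Classical in
noncomputable def step (i : S) (P : Finset N) : Finset N :=
  Finset.univ.filter fun b => ∃ a ∈ P, (a, b, i) ∈ E

noncomputable def state (w : List S) : Finset N :=
  w.foldl (fun P i => step E i P) Finset.univ

variable {E}

theorem mem_step {i : S} {P : Finset N} {b : N} : b ∈ step E i P ↔ ∃ a ∈ P, (a, b, i) ∈ E := by
  simp [step]

theorem state_append_singleton (w : List S) (i : S) :
    state E (w ++ [i]) = step E i (state E w) := by
  simp [state]

theorem walk_last_mem_foldl_step (w : List S) (P : Finset N) (a : Fin (w.length + 1) → N)
    (ha₀ : a 0 ∈ P) (ha : ∀ k : Fin w.length, (a k.castSucc, a k.succ, w.get k) ∈ E) :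
    a (Fin.last w.length) ∈ w.foldl (fun P i => step E i P) P := by
  induction w generalizing P with
  | nil => exact ha₀
  | cons i w ih =>
    refine ih (step E i P) (a ∘ Fin.succ) (mem_step.2 ⟨a 0, ha₀, ha 0⟩) fun k => ?_
    have hk := ha k.succ
    rw [← Fin.succ_castSucc] at hk
    exact hk

theorem state_nonempty [Nonempty S] (hE : PathComplete E) (w : List S) :
    (state E w).Nonempty := by
  -- a walk along `w` extended by one letter passes through `state E w` one step before its end
  let i := Classical.arbitrary S
  obtain ⟨a, ha⟩ := hE (w ++ [i]).length (by simp) (w ++ [i]).get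
  have hend : a (Fin.last _) ∈ state E (w ++ [i]) :=
    walk_last_mem_foldl_step (w ++ [i]) Finset.univ a (Finset.mem_univ _) ha
  rw [state_append_singleton, mem_step] at hend
  obtain ⟨s, hs, -⟩ := hend
  exact ⟨s, hs⟩

variable (E)

noncomputable def nodes : Finset (Finset N) :=
  (Set.toFinite (Set.range (state E))).toFinset

variable {E}

theorem mem_nodes {P : Finset N} : P ∈ nodes E ↔ ∃ w, state E w = P := by
  simp [nodes]

theorem univ_mem_nodes : Finset.univ ∈ nodes E := mem_nodes.2 ⟨[], rfl⟩

theorem step_mem_nodes {P : Finset N} (hP : P ∈ nodes E) (i : S) : step E i P ∈ nodes E := by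
  obtain ⟨w, rfl⟩ := mem_nodes.1 hP
  exact mem_nodes.2 ⟨w ++ [i], state_append_singleton w i⟩

theorem nonempty_of_mem_nodes [Nonempty S] (hE : PathComplete E) {P : Finset N}
    (hP : P ∈ nodes E) : P.Nonempty := by
  obtain ⟨w, rfl⟩ := mem_nodes.1 hP
  exact state_nonempty hE w

variable (E)

def edges : Set ({P // P ∈ nodes E} × {P // P ∈ nodes E} × S) :=
  {e | e.2.1.val = step E e.2.2 e.1.val}

variable {E}

theorem edges_deterministic {P Q Q' : {P // P ∈ nodes E}} {i : S} (hQ : (P, Q, i) ∈ edges E)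
    (hQ' : (P, Q', i) ∈ edges E) : Q = Q' :=
  Subtype.ext (hQ.trans hQ'.symm)

theorem edges_complete (P : {P // P ∈ nodes E}) (i : S) : ∃ Q, (P, Q, i) ∈ edges E :=
  ⟨⟨step E i P, step_mem_nodes P.2 i⟩, rfl⟩

theorem exists_pred_of_mem_edges {P Q : {P // P ∈ nodes E}} {i : S} (hPQ : (P, Q, i) ∈ edges E)
    {t : N} (ht : t ∈ Q.val) : ∃ s ∈ P.val, (s, t, i) ∈ E :=
  mem_step.1 (hPQ ▸ ht)

instance : Nonempty {P // P ∈ nodes E} := ⟨⟨_, univ_mem_nodes⟩⟩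

end Observer

open Observer in
theorem observer_graph_pclf_general {S : Type} [Nonempty S]
    {N : Type} [Fintype N] (E : Set (N × N × S)) (hpc : PathComplete E) :
    ∃ (NO : Finset (Finset N)) (hne : ∀ P ∈ NO, P.Nonempty)
      (EO : Set ({P // P ∈ NO} × {P // P ∈ NO} × S)),
      (∀ (a b b' : {P // P ∈ NO}) (i : S),
        (a, b, i) ∈ EO → (a, b', i) ∈ EO → b = b') ∧
      (∀ (a : {P // P ∈ NO}) (i : S), ∃ b, (a, b, i) ∈ EO) ∧
      ∀ (n : ℕ), 1 ≤ n →
        ∀ f : S → EuclideanSpace ℝ (Fin n) → EuclideanSpace ℝ (Fin n),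
          (∀ i, Continuous (f i)) →
          ∀ V : N → EuclideanSpace ℝ (Fin n) → ℝ, IsPCLF E f V →
            IsPCLF EO f fun P x =>
              (P : Finset N).sup' (hne P P.prop) fun s => V s x := by
  refine ⟨nodes E, fun P => nonempty_of_mem_nodes hpc, edges E,
    fun P Q Q' i => edges_deterministic, edges_complete, fun n _ f _ V hV => ?_⟩
  exact hV.sup' _ (pathComplete_of_forall_exists edges_complete) _ _
    fun P Q i hPQ t => exists_pred_of_mem_edges hPQ

/-- Lemma 2, observer graph: every path-complete graph admits a
deterministic and complete "observer" graph whose nodes are nonempty subsets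
of the original nodes, transporting PCLFs via pointwise maxima. -/
theorem observer_graph_pclf {S : Type} [Fintype S] [Nonempty S]
    {N : Type} [Fintype N] (E : Set (N × N × S)) (hpc : PathComplete E) :
    ∃ (NO : Finset (Finset N)) (hne : ∀ P ∈ NO, P.Nonempty)
      (EO : Set ({P // P ∈ NO} × {P // P ∈ NO} × S)),
      (∀ (a b b' : {P // P ∈ NO}) (i : S),
        (a, b, i) ∈ EO → (a, b', i) ∈ EO → b = b') ∧
      (∀ (a : {P // P ∈ NO}) (i : S), ∃ b, (a, b, i) ∈ EO) ∧
      ∀ (n : ℕ), 1 ≤ n →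
        ∀ f : S → EuclideanSpace ℝ (Fin n) → EuclideanSpace ℝ (Fin n),
          (∀ i, Continuous (f i)) →
          ∀ V : N → EuclideanSpace ℝ (Fin n) → ℝ, IsPCLF E f V →
            IsPCLF EO f fun P x =>
              (P : Finset N).sup' (hne P P.prop) fun s => V s x :=
  observer_graph_pclf_general E hpc
end

section
/- For every path-complete graph G = (N, E) on a finite nonempty alphabet S, there exist a deterministic and complete graph O = (N_O, E_O) on S, with N_O a collection of nonempty subsets of N, and an assignment P ↦ B_P of a regular language B_P ⊆ S* to each node P ∈ N_O, such that the family {B_P}_{P∈N_O} is a covering family of languages and, for all P, Q ∈ N_O and all h ∈ S, (P, Q, h) ∈ E_O if and only if h·B_P ⊆ B_Q. -/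
/-!
The observer node of a word `w` is the set of nodes from which a path labelled `w` starts;
path-completeness makes it nonempty. Prepending a letter `h` replaces it by its set of
`h`-predecessors, so the observer nodes with the predecessor map form a deterministic complete
graph. The words sharing an observer node form a regular language (an automaton reading the word
backwards computes the node), these classes partition all words, and prepending `h` maps one class
into another exactly when the predecessor map sends the first node to the second.
-/

open Filter Topology NNReal

theorem Language.isRegular_foldr {α σ : Type*} [Fintype σ] (f : α → σ → σ) (s : σ)
    (T : Set σ) :
    Language.IsRegular (({w | w.foldr f s ∈ T} : Set (List α)) : Language α) := by
  refine .of_reverse <|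
    Language.isRegular_iff.mpr ⟨σ, inferInstance, ⟨fun q a => f a q, s, T⟩, ?_⟩
  ext w
  change w.foldl (fun q a => f a q) s ∈ T ↔ w.reverse.foldr f s ∈ T
  rw [List.foldr_reverse]

namespace ObserverGraph

variable {S N : Type*} [Fintype N] (E : Set (N × N × S))

open Classical in
noncomputable def predecessors (h : S) (P : Finset N) : Finset N :=
  Finset.univ.filter fun a => ∃ b ∈ P, (a, b, h) ∈ E

theorem mem_predecessors {h : S} {P : Finset N} {a : N} :
    a ∈ predecessors E h P ↔ ∃ b ∈ P, (a, b, h) ∈ E := by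
  simp [predecessors]

noncomputable def state (w : List S) : Finset N :=
  w.foldr (predecessors E) Finset.univ

@[simp]
theorem state_cons (h : S) (w : List S) : state E (h :: w) = predecessors E h (state E w) :=
  rfl

theorem apply_zero_mem_state_ofFn {K : ℕ} (j : Fin K → S) (a : Fin (K + 1) → N)
    (ha : ∀ k : Fin K, (a k.castSucc, a k.succ, j k) ∈ E) : a 0 ∈ state E (List.ofFn j) := by
  induction K with
  | zero => simp [state]
  | succ K ih =>
    rw [List.ofFn_succ, state_cons, mem_predecessors]
    refine ⟨a 1, ih (fun k => j k.succ) (fun k => a k.succ) fun k => ?_, ha 0⟩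
    simpa only [Fin.succ_castSucc] using ha k.succ

theorem state_nonempty [Nonempty S] (hpc : PathComplete E) (w : List S) :
    (state E w).Nonempty := by
  let s : S := Classical.arbitrary S
  obtain ⟨a, ha⟩ := hpc (s :: w).length (by simp) (s :: w).get
  have hmem := apply_zero_mem_state_ofFn E _ a ha
  rw [List.ofFn_get, state_cons, mem_predecessors] at hmem
  obtain ⟨b, hb, -⟩ := hmem
  exact ⟨b, hb⟩

open Classical in
noncomputable def nodes : Finset (Finset N) :=
  Finset.univ.filter fun P => ∃ w : List S, state E w = P

theorem mem_nodes {P : Finset N} : P ∈ nodes E ↔ ∃ w : List S, state E w = P := by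
  simp [nodes]

theorem state_mem_nodes (w : List S) : state E w ∈ nodes E :=
  (mem_nodes E).mpr ⟨w, rfl⟩

theorem predecessors_mem_nodes {P : Finset N} (hP : P ∈ nodes E) (h : S) :
    predecessors E h P ∈ nodes E := by
  obtain ⟨w, rfl⟩ := (mem_nodes E).mp hP
  exact state_mem_nodes E (h :: w)

theorem nonempty_of_mem_nodes [Nonempty S] (hpc : PathComplete E) {P : Finset N}
    (hP : P ∈ nodes E) : P.Nonempty := by
  obtain ⟨w, rfl⟩ := (mem_nodes E).mp hP
  exact state_nonempty E hpc w

def language (P : Finset N) : Set (List S) :=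
  {w | state E w = P}

theorem cons_image_language_subset_iff {P : Finset N} (hP : P ∈ nodes E) (Q : Finset N) (h : S) :
    (fun w => h :: w) '' language E P ⊆ language E Q ↔ predecessors E h P = Q := by
  constructor
  · intro hsub
    obtain ⟨w, hw⟩ := (mem_nodes E).mp hP
    have hcons : state E (h :: w) = Q := hsub ⟨w, hw, rfl⟩
    rwa [state_cons, hw] at hcons
  · rintro rfl _ ⟨w, hw, rfl⟩
    exact (state_cons E h w).trans (congrArg _ hw)

open Classical in
theorem isCoveringFamily_language :
    IsCoveringFamily (Finset.univ.image fun P : {P // P ∈ nodes E} => language E P) := by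
  refine ⟨?_, ?_, ?_⟩
  · simp only [Finset.mem_image, Finset.mem_univ, true_and, forall_exists_index]
    rintro _ P rfl
    exact Language.isRegular_foldr (predecessors E) Finset.univ {(P : Finset N)}
  · refine Set.eq_univ_of_forall fun w => Set.mem_biUnion (Finset.mem_image_of_mem _
      (Finset.mem_univ ⟨state E w, state_mem_nodes E w⟩))
      (show w ∈ language E (state E w) from rfl)
  · simp only [Finset.mem_image, Finset.mem_univ, true_and, exists_exists_eq_and,
      forall_exists_index]
    rintro _ P rfl h
    exact ⟨⟨_, predecessors_mem_nodes E P.2 h⟩,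
      (cons_image_language_subset_iff E P.2 _ h).mpr rfl⟩

end ObserverGraph

open ObserverGraph

open Classical in
theorem observer_graph_covering_general {S : Type} [Nonempty S]
    {N : Type} [Fintype N] (E : Set (N × N × S)) (hpc : PathComplete E) :
    ∃ (NO : Finset (Finset N)) (_ : ∀ P ∈ NO, P.Nonempty)
      (EO : Set ({P // P ∈ NO} × {P // P ∈ NO} × S))
      (B : {P // P ∈ NO} → Set (List S)),
      (∀ (a b b' : {P // P ∈ NO}) (i : S),
        (a, b, i) ∈ EO → (a, b', i) ∈ EO → b = b') ∧
      (∀ (a : {P // P ∈ NO}) (i : S), ∃ b, (a, b, i) ∈ EO) ∧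
      IsCoveringFamily (Finset.image B Finset.univ) ∧
      (∀ (P Q : {P // P ∈ NO}) (h : S),
        (P, Q, h) ∈ EO ↔ (fun w => h :: w) '' B P ⊆ B Q) := by
  refine ⟨nodes E, fun P => nonempty_of_mem_nodes E hpc, {e | predecessors E e.2.2 e.1 = e.2.1},
    fun P => language E P, ?deterministic, ?complete, isCoveringFamily_language E, ?edges⟩
  case deterministic =>
    intro a b b' i hb hb'
    exact Subtype.ext (hb.symm.trans hb')
  case complete =>
    intro a i
    exact ⟨⟨_, predecessors_mem_nodes E a.2 i⟩, rfl⟩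
  case edges =>
    intro P Q h
    exact (cons_image_language_subset_iff E P.2 Q h).symm

open Classical in
/-- Lemma 3: the observer graph of a path-complete graph comes
with regular languages attached to its nodes forming a covering family, with
edges characterized by inclusion under prepending. -/
theorem observer_graph_covering {S : Type} [Fintype S] [Nonempty S]
    {N : Type} [Fintype N] (E : Set (N × N × S)) (hpc : PathComplete E) :
    ∃ (NO : Finset (Finset N)) (_ : ∀ P ∈ NO, P.Nonempty)
      (EO : Set ({P // P ∈ NO} × {P // P ∈ NO} × S))
      (B : {P // P ∈ NO} → Set (List S)),
      (∀ (a b b' : {P // P ∈ NO}) (i : S),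
        (a, b, i) ∈ EO → (a, b', i) ∈ EO → b = b') ∧
      (∀ (a : {P // P ∈ NO}) (i : S), ∃ b, (a, b, i) ∈ EO) ∧
      IsCoveringFamily (Finset.image B Finset.univ) ∧
      (∀ (P Q : {P // P ∈ NO}) (h : S),
        (P, Q, h) ∈ EO ↔ (fun w => h :: w) '' B P ⊆ B Q) :=
  observer_graph_covering_general E hpc
end

section
/- A graph G = (N, E) on a finite nonempty alphabet S is path-complete if and only if its dual graph G^T = (N, E^T) is path-complete. -/
open Filter Topology NNReal

theorem PathComplete.dual {N S : Type*} {E : Set (N × N × S)} (h : PathComplete E) :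
    PathComplete {p : N × N × S | (p.2.1, p.1, p.2.2) ∈ E} := by
  intro K hK j
  obtain ⟨a, ha⟩ := h K hK (j ∘ Fin.rev)
  refine ⟨a ∘ Fin.rev, fun k => ?_⟩
  simpa [Fin.rev_succ, Fin.rev_castSucc] using ha k.rev

theorem pathComplete_iff_dual_general {S : Type}
    {N : Type} (E : Set (N × N × S)) :
    PathComplete E ↔
      PathComplete {p : N × N × S | (p.2.1, p.1, p.2.2) ∈ E} :=
  ⟨PathComplete.dual, PathComplete.dual⟩

/-- a graph is path-complete iff its dual graph (with all
edges reversed, keeping labels) is path-complete. -/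
theorem pathComplete_iff_dual {S : Type} [Fintype S] [Nonempty S]
    {N : Type} [Fintype N] (E : Set (N × N × S)) :
    PathComplete E ↔
      PathComplete {p : N × N × S | (p.2.1, p.1, p.2.2) ∈ E} :=
  pathComplete_iff_dual_general E
end
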